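/- Let C > 0, θ ∈ [0,1), suppose ‖Φ(k,s)_{ij} − q_j(s)‖ ≤ Cθ^{k−s} for all i,j and t ≥ s, that ‖g_j(r)‖ ≤ L for all j, r, and that q(k) is a stochastic vector for each k. Given x_i(k) = ∑_j Φ(k−1,0)_{ij} x_j(0) − ∑_{r=0}^{k−2} η(r) ∑_j Φ(k−1,r+1)_{ij} g_j(r) − η(k−1) g_i(k−1) and y(k) = ∑_j q_j(0) x_j(0) − ∑_{r=0}^{k−2} η(r) ∑_j q_j(r+1) g_j(r) − η(k−1) ∑_j q_j(k) g_j(k−1), then ‖x_i(k) − y(k)‖ ≤ Cθ^{k−1} ∑_{j=1}^R ‖x_j(0)‖ + RCL ∑_{r=0}^{k−2} η(r) θ^{k−r−2} + 2η(k−1)L. -/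
import Mathlib


theorem stmt_14 (n R : ℕ) (C θ L : ℝ) (hC : 0 < C) (hθ0 : 0 ≤ θ) (hθ1 : θ < 1)
    (Φ : ℕ → ℕ → Matrix (Fin R) (Fin R) ℝ) (q : ℕ → Fin R → ℝ)
    (hΦq : ∀ (k s : ℕ), s ≤ k → ∀ i j, |Φ k s i j - q s j| ≤ C * θ ^ (k - s))
    (g : Fin R → ℕ → EuclideanSpace ℝ (Fin n))
    (hg : ∀ j r, ‖g j r‖ ≤ L)
    (hq0 : ∀ k j, 0 ≤ q k j) (hq1 : ∀ k, ∑ j, q k j = 1)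
    (η : ℕ → ℝ) (hη : ∀ r, 0 ≤ η r)
    (x0 : Fin R → EuclideanSpace ℝ (Fin n))
    (k : ℕ) (hk : 1 ≤ k) (i : Fin R)
    (xik yk : EuclideanSpace ℝ (Fin n))
    (hx : xik = (∑ j, Φ (k - 1) 0 i j • x0 j)
        - (∑ r ∈ Finset.range (k - 1), η r • ∑ j, Φ (k - 1) (r + 1) i j • g j r)
        - η (k - 1) • g i (k - 1))
    (hy : yk = (∑ j, q 0 j • x0 j)
        - (∑ r ∈ Finset.range (k - 1), η r • ∑ j, q (r + 1) j • g j r)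
        - η (k - 1) • ∑ j, q k j • g j (k - 1)) :
    ‖xik - yk‖ ≤ C * θ ^ (k - 1) * ∑ j, ‖x0 j‖
      + (R : ℝ) * C * L * ∑ r ∈ Finset.range (k - 1), η r * θ ^ (k - r - 2)
      + 2 * η (k - 1) * L := by
  have hL : 0 ≤ L := le_trans (norm_nonneg _) (hg i 0)
  set T1 : EuclideanSpace ℝ (Fin n) := ∑ j, (Φ (k - 1) 0 i j - q 0 j) • x0 j with hT1
  set T2 : EuclideanSpace ℝ (Fin n) :=
    ∑ r ∈ Finset.range (k - 1), η r • ∑ j, (Φ (k - 1) (r + 1) i j - q (r + 1) j) • g j r with hT2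
  set T3 : EuclideanSpace ℝ (Fin n) :=
    η (k - 1) • (g i (k - 1) - ∑ j, q k j • g j (k - 1)) with hT3
  have hdiff : xik - yk = T1 - T2 - T3 := by
    subst hx hy
    rw [hT1, hT2, hT3]
    simp only [sub_smul, smul_sub, Finset.sum_sub_distrib]
    abel
  rw [hdiff]
  have b1 : ‖T1‖ ≤ C * θ ^ (k - 1) * ∑ j, ‖x0 j‖ := by
    calc ‖T1‖ ≤ ∑ j, ‖(Φ (k - 1) 0 i j - q 0 j) • x0 j‖ := norm_sum_le _ _
    _ ≤ ∑ j, C * θ ^ (k - 1) * ‖x0 j‖ := by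
        refine Finset.sum_le_sum fun j _ => ?_
        rw [norm_smul]
        have := hΦq (k - 1) 0 (Nat.zero_le _) i j
        simp only [Nat.sub_zero] at this
        exact mul_le_mul_of_nonneg_right this (norm_nonneg _)
    _ = C * θ ^ (k - 1) * ∑ j, ‖x0 j‖ := by rw [Finset.mul_sum]
  have b2 : ‖T2‖ ≤ (R : ℝ) * C * L * ∑ r ∈ Finset.range (k - 1), η r * θ ^ (k - r - 2) := by
    calc ‖T2‖ ≤ ∑ r ∈ Finset.range (k - 1),
        ‖η r • ∑ j, (Φ (k - 1) (r + 1) i j - q (r + 1) j) • g j r‖ := norm_sum_le _ _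
    _ ≤ ∑ r ∈ Finset.range (k - 1), (R : ℝ) * C * L * (η r * θ ^ (k - r - 2)) := by
        refine Finset.sum_le_sum fun r hr => ?_
        rw [Finset.mem_range] at hr
        have hrk : r + 1 ≤ k - 1 := hr
        have hexp : k - 1 - (r + 1) = k - r - 2 := by omega
        rw [norm_smul, Real.norm_eq_abs, abs_of_nonneg (hη r)]
        have hin : ‖∑ j, (Φ (k - 1) (r + 1) i j - q (r + 1) j) • g j r‖
            ≤ (R : ℝ) * (C * θ ^ (k - r - 2) * L) := by
          calc ‖∑ j, (Φ (k - 1) (r + 1) i j - q (r + 1) j) • g j r‖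
              ≤ ∑ j : Fin R, ‖(Φ (k - 1) (r + 1) i j - q (r + 1) j) • g j r‖ :=
                norm_sum_le _ _
          _ ≤ ∑ _j : Fin R, C * θ ^ (k - r - 2) * L := by
              refine Finset.sum_le_sum fun j _ => ?_
              rw [norm_smul]
              have h1 := hΦq (k - 1) (r + 1) hrk i j
              rw [hexp] at h1
              exact mul_le_mul h1 (hg j r) (norm_nonneg _)
                (by positivity)
          _ = (R : ℝ) * (C * θ ^ (k - r - 2) * L) := by
              rw [Finset.sum_const, Finset.card_univ, Fintype.card_fin, nsmul_eq_mul]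
        calc η r * ‖∑ j, (Φ (k - 1) (r + 1) i j - q (r + 1) j) • g j r‖
            ≤ η r * ((R : ℝ) * (C * θ ^ (k - r - 2) * L)) :=
              mul_le_mul_of_nonneg_left hin (hη r)
        _ = (R : ℝ) * C * L * (η r * θ ^ (k - r - 2)) := by ring
    _ = (R : ℝ) * C * L * ∑ r ∈ Finset.range (k - 1), η r * θ ^ (k - r - 2) := by
        rw [Finset.mul_sum]
  have b3 : ‖T3‖ ≤ 2 * η (k - 1) * L := by
    rw [hT3, norm_smul, Real.norm_eq_abs, abs_of_nonneg (hη (k - 1))]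
    have hsum : ‖∑ j, q k j • g j (k - 1)‖ ≤ L := by
      calc ‖∑ j, q k j • g j (k - 1)‖ ≤ ∑ j, ‖q k j • g j (k - 1)‖ := norm_sum_le _ _
      _ ≤ ∑ j, q k j * L := by
          refine Finset.sum_le_sum fun j _ => ?_
          rw [norm_smul, Real.norm_eq_abs, abs_of_nonneg (hq0 k j)]
          exact mul_le_mul_of_nonneg_left (hg j (k - 1)) (hq0 k j)
      _ = L := by rw [← Finset.sum_mul, hq1, one_mul]
    have : ‖g i (k - 1) - ∑ j, q k j • g j (k - 1)‖ ≤ 2 * L := by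
      calc ‖g i (k - 1) - ∑ j, q k j • g j (k - 1)‖
          ≤ ‖g i (k - 1)‖ + ‖∑ j, q k j • g j (k - 1)‖ := norm_sub_le _ _
      _ ≤ L + L := add_le_add (hg i (k - 1)) hsum
      _ = 2 * L := by ring
    calc η (k - 1) * ‖g i (k - 1) - ∑ j, q k j • g j (k - 1)‖
        ≤ η (k - 1) * (2 * L) := mul_le_mul_of_nonneg_left this (hη (k - 1))
    _ = 2 * η (k - 1) * L := by ring
  calc ‖T1 - T2 - T3‖ ≤ ‖T1 - T2‖ + ‖T3‖ := norm_sub_le _ _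
  _ ≤ ‖T1‖ + ‖T2‖ + ‖T3‖ := by linarith [norm_sub_le T1 T2]
  _ ≤ _ := by linarith
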